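/- arXiv:1403.5116 — 5 statements merged into one kernel-verified Lean document; each statement's English description precedes it below -/
import Mathlib

section
/- Let a > 0 and λ = φ_a(z) = -a((z+1)/(z-1))² for z ∈ 𝔻. Then (√a/4)·d(λ,[0,∞))/(√|λ|·(a+|λ|)) ≤ 1-|z| ≤ 4√a·d(λ,[0,∞))/(√|λ|·(a+|λ|)), where d(λ,[0,∞)) is the distance from λ to the nonnegative real half-axis. -/
/-!
Put `u = (1 + z) / (1 - z)`, so that `λ = -a u²` and `Re u > 0`. For any `w`, the distance
from `-w²` to `[0, ∞)` lies between `|Re w| ‖w‖` and `2 |Re w| ‖w‖`; applied to `w = √a u`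
this makes `√a d(λ, [0, ∞)) / (√|λ| (a + |λ|))` equal to `Re u / (1 + |u|²)` up to a factor
`2`. On the other hand `Re u |1 - z|² = 1 - |z|²` and, by the parallelogram law,
`(1 + |u|²) |1 - z|² = |1 - z|² + |1 + z|² = 2 (1 + |z|²)`, so
`Re u / (1 + |u|²) = (1 - |z|) (1 + |z|) / (2 (1 + |z|²))` lies between `(1 - |z|) / 2` and
`1 - |z|`.
-/

open Complex Metric

abbrev nonnegAxis : Set ℂ := {w | ∃ t : ℝ, 0 ≤ t ∧ w = t}

lemma abs_re_mul_norm_le_infDist_neg_sq (w : ℂ) :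
    |w.re| * ‖w‖ ≤ infDist (-w ^ 2) nonnegAxis := by
  refine (le_infDist (⟨0, 0, le_rfl, by simp⟩ : nonnegAxis.Nonempty)).2 ?_
  rintro _ ⟨t, ht, rfl⟩
  rw [Complex.dist_eq, ← pow_le_pow_iff_left₀ (by positivity) (norm_nonneg _) two_ne_zero,
    mul_pow, sq_abs, Complex.sq_norm, Complex.sq_norm]
  simp only [normSq_apply, sub_re, sub_im, neg_re, neg_im, ofReal_re, ofReal_im, pow_two, mul_re,
    mul_im]
  rcases le_total (w.im ^ 2) (w.re ^ 2) with h | h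
  · nlinarith [mul_nonneg (sub_nonneg.2 h) ht, sq_nonneg w.re, sq_nonneg t, sq_nonneg (w.re * w.im)]
  · nlinarith [sq_nonneg (w.im * w.im - w.re * w.re - t),
      mul_nonneg (sq_nonneg w.re) (sub_nonneg.2 h)]

lemma infDist_neg_sq_le_two_mul_abs_re_mul_norm (w : ℂ) :
    infDist (-w ^ 2) nonnegAxis ≤ 2 * |w.re| * ‖w‖ := by
  -- the point of the axis nearest to `-w²`
  have hmem : ((max (w.im ^ 2 - w.re ^ 2) 0 : ℝ) : ℂ) ∈ nonnegAxis := ⟨_, le_max_right _ _, rfl⟩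
  refine (infDist_le_dist_of_mem hmem).trans ?_
  rw [Complex.dist_eq, ← pow_le_pow_iff_left₀ (norm_nonneg _) (by positivity) two_ne_zero,
    mul_pow, mul_pow, sq_abs, Complex.sq_norm, Complex.sq_norm]
  simp only [normSq_apply, sub_re, sub_im, neg_re, neg_im, ofReal_re, ofReal_im, pow_two, mul_re,
    mul_im]
  rcases le_total (w.im ^ 2) (w.re ^ 2) with h | h
  · rw [max_eq_right (by linarith)]
    nlinarith [sq_nonneg w.re, sq_nonneg w.im, mul_nonneg (sq_nonneg w.re) (sub_nonneg.2 h)]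
  · rw [max_eq_left (by linarith)]
    nlinarith [sq_nonneg (w.re * w.re), sq_nonneg (w.re * w.im)]

lemma sqrt_mul_infDist_div_mem_Icc {a : ℝ} (ha : 0 < a) (u : ℂ) :
    √a * (infDist (-(a : ℂ) * u ^ 2) nonnegAxis /
        (√‖-(a : ℂ) * u ^ 2‖ * (a + ‖-(a : ℂ) * u ^ 2‖))) ∈
      Set.Icc (|u.re| / (1 + ‖u‖ ^ 2)) (2 * (|u.re| / (1 + ‖u‖ ^ 2))) := by
  rcases eq_or_ne u 0 with rfl | hu
  · simp
  have hsa : 0 < √a := Real.sqrt_pos.2 ha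
  have hsa2 : √a * √a = a := Real.mul_self_sqrt ha.le
  have hw : -(a : ℂ) * u ^ 2 = -((√a : ℂ) * u) ^ 2 := by
    rw [mul_pow, ← ofReal_pow, Real.sq_sqrt ha.le]; ring
  have hre : |((√a : ℂ) * u).re| = √a * |u.re| := by
    rw [re_ofReal_mul, abs_mul, abs_of_pos hsa]
  have hnorm : ‖(√a : ℂ) * u‖ = √a * ‖u‖ := by
    rw [norm_mul, norm_real, Real.norm_of_nonneg hsa.le]
  have hlam : ‖-(a : ℂ) * u ^ 2‖ = a * ‖u‖ ^ 2 := by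
    rw [norm_mul, norm_neg, norm_real, Real.norm_of_nonneg ha.le, norm_pow]
  have hsqrt : √(a * ‖u‖ ^ 2) = √a * ‖u‖ := by
    rw [Real.sqrt_mul ha.le, Real.sqrt_sq (norm_nonneg u)]
  have hlo := abs_re_mul_norm_le_infDist_neg_sq ((√a : ℂ) * u)
  have hhi := infDist_neg_sq_le_two_mul_abs_re_mul_norm ((√a : ℂ) * u)
  rw [← hw, hre, hnorm] at hlo hhi
  have hscale : √a * |u.re| * (√a * ‖u‖) = |u.re| * (a * ‖u‖) := by
    linear_combination (|u.re| * ‖u‖) * hsa2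
  set d := infDist (-(a : ℂ) * u ^ 2) nonnegAxis
  have hc : 0 < a * ‖u‖ := mul_pos ha (norm_pos_iff.2 hu)
  have hratio : √a * (d / (√a * ‖u‖ * (a + a * ‖u‖ ^ 2))) = d / (a * ‖u‖) / (1 + ‖u‖ ^ 2) := by
    field_simp
  rw [hlam, hsqrt, hratio, Set.mem_Icc, ← mul_div_assoc,
    div_le_div_iff_of_pos_right (by positivity), div_le_div_iff_of_pos_right (by positivity),
    le_div_iff₀ hc, div_le_iff₀ hc]
  constructor <;> linarith

lemma re_div_one_sub_mul_norm_sq (z : ℂ) :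
    ((1 + z) / (1 - z)).re * ‖1 - z‖ ^ 2 = 1 - ‖z‖ ^ 2 := by
  rcases eq_or_ne z 1 with rfl | hz
  · norm_num
  have hn : normSq (1 - z) ≠ 0 := normSq_eq_zero.not.2 (sub_ne_zero.2 hz.symm)
  rw [div_re, Complex.sq_norm, Complex.sq_norm, ← add_div, div_mul_cancel₀ _ hn, normSq_apply]
  simp only [add_re, add_im, sub_re, sub_im, one_re, one_im]
  ring

lemma re_div_one_sub_pos {z : ℂ} (hz : ‖z‖ < 1) : 0 < ((1 + z) / (1 - z)).re := by
  have hpos : 0 < 1 - ‖z‖ ^ 2 := by nlinarith [norm_nonneg z]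
  rw [← re_div_one_sub_mul_norm_sq z] at hpos
  exact pos_of_mul_pos_left hpos (by positivity)

lemma re_div_one_add_norm_sq_mem_Icc {z : ℂ} (hz : ‖z‖ < 1) :
    ((1 + z) / (1 - z)).re / (1 + ‖(1 + z) / (1 - z)‖ ^ 2) ∈
      Set.Icc ((1 - ‖z‖) / 2) (1 - ‖z‖) := by
  set u := (1 + z) / (1 - z)
  have hs := norm_nonneg z
  have hn : 0 < ‖1 - z‖ ^ 2 := by
    have : (1 : ℂ) - z ≠ 0 := sub_ne_zero.2 (by rintro rfl; simp at hz)
    positivity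
  have hre := re_div_one_sub_mul_norm_sq z
  have hnorm : ‖u‖ ^ 2 * ‖1 - z‖ ^ 2 = ‖1 + z‖ ^ 2 := by
    rw [norm_div, div_pow, div_mul_cancel₀ _ hn.ne']
  have hpar : ‖1 + z‖ ^ 2 + ‖1 - z‖ ^ 2 = 2 * (1 + ‖z‖ ^ 2) := by
    rw [parallelogram_law_with_norm ℝ, norm_one]; ring
  have hK : (1 + ‖u‖ ^ 2) * ‖1 - z‖ ^ 2 = 2 * (1 + ‖z‖ ^ 2) := by
    linear_combination hnorm + hpar
  rw [Set.mem_Icc, le_div_iff₀ (by positivity), div_le_iff₀ (by positivity)]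
  constructor
  · refine le_of_mul_le_mul_right ?_ hn
    calc (1 - ‖z‖) / 2 * (1 + ‖u‖ ^ 2) * ‖1 - z‖ ^ 2 = (1 - ‖z‖) * (1 + ‖z‖ ^ 2) := by
          linear_combination (1 - ‖z‖) / 2 * hK
      _ ≤ 1 - ‖z‖ ^ 2 := by nlinarith [mul_nonneg hs (sub_nonneg.2 hz.le)]
      _ = u.re * ‖1 - z‖ ^ 2 := hre.symm
  · refine le_of_mul_le_mul_right ?_ hn
    calc u.re * ‖1 - z‖ ^ 2 = 1 - ‖z‖ ^ 2 := hre
      _ ≤ (1 - ‖z‖) * (2 * (1 + ‖z‖ ^ 2)) := by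
          nlinarith [mul_nonneg (sub_nonneg.2 hz.le) (sq_nonneg (‖z‖ - 1 / 2))]
      _ = (1 - ‖z‖) * (1 + ‖u‖ ^ 2) * ‖1 - z‖ ^ 2 := by linear_combination -(1 - ‖z‖) * hK

theorem stmt_3_general (a : ℝ) (ha : 0 < a) (z : ℂ) (hz : z ∈ Metric.ball (0 : ℂ) 1) (lam : ℂ)
    (hlam : lam = -(a : ℂ) * ((z + 1) / (z - 1)) ^ 2) :
    Real.sqrt a / 4 * (Metric.infDist lam {w : ℂ | ∃ t : ℝ, 0 ≤ t ∧ w = (t : ℂ)} /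
        (Real.sqrt (‖lam‖) * (a + ‖lam‖))) ≤ 1 - ‖z‖ ∧
    1 - ‖z‖ ≤ 4 * Real.sqrt a *
      (Metric.infDist lam {w : ℂ | ∃ t : ℝ, 0 ≤ t ∧ w = (t : ℂ)} /
        (Real.sqrt (‖lam‖) * (a + ‖lam‖))) := by
  have hz' : ‖z‖ < 1 := mem_ball_zero_iff.1 hz
  have hlam' : lam = -(a : ℂ) * ((1 + z) / (1 - z)) ^ 2 := by
    rw [hlam, div_pow, div_pow, add_comm z, ← neg_sq (1 - z), neg_sub]
  obtain ⟨hlo, hhi⟩ := sqrt_mul_infDist_div_mem_Icc ha ((1 + z) / (1 - z))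
  obtain ⟨hzlo, hzhi⟩ := re_div_one_add_norm_sq_mem_Icc hz'
  rw [← hlam', abs_of_pos (re_div_one_sub_pos hz'), nonnegAxis] at hlo hhi
  constructor <;> linarith

theorem stmt_3 (a : ℝ) (ha : 0 < a) (z : ℂ) (hz : z ∈ Metric.ball (0 : ℂ) 1)
    (hz1 : z ≠ 1) (hz2 : z ≠ -1) (lam : ℂ)
    (hlam : lam = -(a : ℂ) * ((z + 1) / (z - 1)) ^ 2) :
    Real.sqrt a / 4 * (Metric.infDist lam {w : ℂ | ∃ t : ℝ, 0 ≤ t ∧ w = (t : ℂ)} /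
        (Real.sqrt (‖lam‖) * (a + ‖lam‖))) ≤ 1 - ‖z‖ ∧
    1 - ‖z‖ ≤ 4 * Real.sqrt a *
      (Metric.infDist lam {w : ℂ | ∃ t : ℝ, 0 ≤ t ∧ w = (t : ℂ)} /
        (Real.sqrt (‖lam‖) * (a + ‖lam‖))) :=
  stmt_3_general a ha z hz lam hlam
end

section
/- Let d ≥ 1, s > 0, p > d/(2s), and let λ ∈ ℂ with Re(λ) < 0. Then ∫₀^∞ r^(d-1)/|r^(2s) - λ|^p dr ≤ (1/(2s))·(∫₀^∞ t^(d/(2s)-1)/(t²+1)^(p/2) dt)·|λ|^(d/(2s)-1)/|λ|^(p-1). -/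
/-!
Substituting `y = r ^ (2 * s)` turns the left side into `(2 * s)⁻¹ ∫ y ^ (a - 1) / ‖y - λ‖ ^ p`
with `a = d / (2 * s)`, and scaling `y = ‖λ‖ * t` pulls out `‖λ‖ ^ (a - p)`. Since `Re λ ≤ 0`,
`‖x - λ‖ ^ 2 ≥ x ^ 2 + ‖λ‖ ^ 2` for real `x ≥ 0`, which bounds the rescaled integrand by
`t ^ (a - 1) / (t ^ 2 + 1) ^ (p / 2)`, integrable on `(0, ∞)` because `0 < a < p`.
-/

open MeasureTheory Set Real

theorem sq_rpow_half {x : ℝ} (hx : 0 ≤ x) {p : ℝ} : (x ^ 2) ^ (p / 2) = x ^ p := by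
  rw [← rpow_natCast_mul hx]; congr 1; push_cast; ring

theorem integrableOn_Ioi_rpow_div_sq_add_one_rpow {a p : ℝ} (ha : 0 < a) (hap : a < p) :
    IntegrableOn (fun t : ℝ => t ^ (a - 1) / (t ^ 2 + 1) ^ (p / 2)) (Ioi 0) := by
  have hmeas : AEStronglyMeasurable (fun t : ℝ => t ^ (a - 1) / (t ^ 2 + 1) ^ (p / 2)) :=
    (by fun_prop : Measurable _).aestronglyMeasurable
  rw [← Ioc_union_Ioi_eq_Ioi zero_le_one]
  refine IntegrableOn.union ?_ ?_
  · have hdom : IntegrableOn (fun t : ℝ => t ^ (a - 1)) (Ioc 0 1) :=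
      (intervalIntegrable_iff_integrableOn_Ioc_of_le zero_le_one).mp
        (intervalIntegral.intervalIntegrable_rpow' (by linarith))
    refine hdom.mono' hmeas.restrict ?_
    filter_upwards [ae_restrict_mem measurableSet_Ioc] with t ht
    have hnum : 0 ≤ t ^ (a - 1) := rpow_nonneg ht.1.le _
    rw [norm_of_nonneg (by positivity)]
    exact div_le_self hnum (one_le_rpow (by nlinarith) (by linarith))
  · have hdom : IntegrableOn (fun t : ℝ => t ^ (a - 1 - p)) (Ioi 1) :=
      integrableOn_Ioi_rpow_of_lt (by linarith) one_pos
    refine hdom.mono' hmeas.restrict ?_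
    filter_upwards [ae_restrict_mem measurableSet_Ioi] with t (ht : 1 < t)
    have ht0 : 0 < t := one_pos.trans ht
    have hpow : t ^ p ≤ (t ^ 2 + 1) ^ (p / 2) := by
      rw [← sq_rpow_half ht0.le]
      exact rpow_le_rpow (by positivity) (by linarith) (by linarith)
    rw [norm_of_nonneg (by positivity), rpow_sub ht0 (a - 1)]
    exact div_le_div_of_nonneg_left (rpow_nonneg ht0.le _) (rpow_pos_of_pos ht0 _) hpow

theorem integral_Ioi_rpow_smul_comp_rpow {E : Type*} [NormedAddCommGroup E] [NormedSpace ℝ E]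
    (g : ℝ → E) (c : ℝ) {q : ℝ} (hq : 0 < q) :
    ∫ x in Ioi 0, x ^ (c - 1) • g (x ^ q) = q⁻¹ • ∫ y in Ioi 0, y ^ (c / q - 1) • g y := by
  rw [← integral_smul]
  conv_rhs => rw [← integral_comp_rpow_Ioi _ hq.ne']
  refine setIntegral_congr_fun measurableSet_Ioi fun x (hx : 0 < x) => ?_
  have hexp : (x ^ q) ^ (c / q - 1) = x ^ (c - q) := by
    rw [← rpow_mul hx.le]; congr 1; field_simp
  have hpow : x ^ (q - 1) * x ^ (c - q) = x ^ (c - 1) := by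
    rw [← rpow_add hx]; ring_nf
  simp only [smul_smul, hexp, abs_of_pos hq]
  congr 1
  rw [← hpow]
  field_simp

theorem sq_add_sq_norm_le_norm_ofReal_sub_sq {x : ℝ} (hx : 0 ≤ x) {z : ℂ} (hz : z.re ≤ 0) :
    x ^ 2 + ‖z‖ ^ 2 ≤ ‖(x : ℂ) - z‖ ^ 2 := by
  rw [Complex.sq_norm, Complex.sq_norm, Complex.normSq_apply, Complex.normSq_apply]
  simp only [Complex.sub_re, Complex.sub_im, Complex.ofReal_re, Complex.ofReal_im]
  nlinarith [mul_nonneg hx (neg_nonneg.mpr hz)]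

theorem mul_rpow_div_norm_ofReal_sub_rpow_le {z : ℂ} (hz : z.re ≤ 0) (hz0 : z ≠ 0) {t : ℝ} (ht : 0 < t)
    (a : ℝ) {p : ℝ} (hp : 0 ≤ p) :
    (‖z‖ * t) ^ (a - 1) / ‖((‖z‖ * t : ℝ) : ℂ) - z‖ ^ p ≤
      ‖z‖ ^ (a - 1 - p) * (t ^ (a - 1) / (t ^ 2 + 1) ^ (p / 2)) := by
  have hA : 0 < ‖z‖ := norm_pos_iff.mpr hz0
  have hden : ‖z‖ ^ p * (t ^ 2 + 1) ^ (p / 2) ≤ ‖((‖z‖ * t : ℝ) : ℂ) - z‖ ^ p :=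
    calc ‖z‖ ^ p * (t ^ 2 + 1) ^ (p / 2) = ((‖z‖ * t) ^ 2 + ‖z‖ ^ 2) ^ (p / 2) := by
          rw [show (‖z‖ * t) ^ 2 + ‖z‖ ^ 2 = (‖z‖ ^ 2) * (t ^ 2 + 1) by ring,
            mul_rpow (by positivity) (by positivity), sq_rpow_half hA.le]
      _ ≤ (‖((‖z‖ * t : ℝ) : ℂ) - z‖ ^ 2) ^ (p / 2) :=
          rpow_le_rpow (by positivity)
            (sq_add_sq_norm_le_norm_ofReal_sub_sq (by positivity) hz) (by positivity)
      _ = ‖((‖z‖ * t : ℝ) : ℂ) - z‖ ^ p := sq_rpow_half (norm_nonneg _)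
  calc (‖z‖ * t) ^ (a - 1) / ‖((‖z‖ * t : ℝ) : ℂ) - z‖ ^ p
      ≤ (‖z‖ * t) ^ (a - 1) / (‖z‖ ^ p * (t ^ 2 + 1) ^ (p / 2)) :=
        div_le_div_of_nonneg_left (by positivity) (by positivity) hden
    _ = ‖z‖ ^ (a - 1 - p) * (t ^ (a - 1) / (t ^ 2 + 1) ^ (p / 2)) := by
        rw [mul_rpow hA.le ht.le, mul_div_mul_comm, ← rpow_sub hA]

theorem integral_Ioi_rpow_div_norm_ofReal_sub_rpow_le {z : ℂ} (hz : z.re ≤ 0) (hz0 : z ≠ 0)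
    {a p : ℝ} (ha : 0 < a) (hap : a < p) :
    ∫ y in Ioi (0 : ℝ), y ^ (a - 1) / ‖(y : ℂ) - z‖ ^ p ≤
      ‖z‖ ^ (a - p) * ∫ t in Ioi (0 : ℝ), t ^ (a - 1) / (t ^ 2 + 1) ^ (p / 2) := by
  have hA : 0 < ‖z‖ := norm_pos_iff.mpr hz0
  have hscale := integral_comp_mul_left_Ioi' (fun y : ℝ => y ^ (a - 1) / ‖(y : ℂ) - z‖ ^ p) 0 hA
  rw [mul_zero] at hscale
  have hmono : ∫ t in Ioi (0 : ℝ), (‖z‖ * t) ^ (a - 1) / ‖((‖z‖ * t : ℝ) : ℂ) - z‖ ^ p ≤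
      ∫ t in Ioi (0 : ℝ), ‖z‖ ^ (a - 1 - p) * (t ^ (a - 1) / (t ^ 2 + 1) ^ (p / 2)) := by
    refine integral_mono_of_nonneg ?_
      ((integrableOn_Ioi_rpow_div_sq_add_one_rpow ha hap).const_mul _) ?_
    · filter_upwards [ae_restrict_mem measurableSet_Ioi] with t (ht : 0 < t)
      positivity
    · filter_upwards [ae_restrict_mem measurableSet_Ioi] with t (ht : 0 < t)
      exact mul_rpow_div_norm_ofReal_sub_rpow_le hz hz0 ht a (ha.trans hap).le
  calc ∫ y in Ioi (0 : ℝ), y ^ (a - 1) / ‖(y : ℂ) - z‖ ^ p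
      = ‖z‖ * ∫ t in Ioi (0 : ℝ), (‖z‖ * t) ^ (a - 1) / ‖((‖z‖ * t : ℝ) : ℂ) - z‖ ^ p :=
        hscale.symm
    _ ≤ ‖z‖ * ∫ t in Ioi (0 : ℝ), ‖z‖ ^ (a - 1 - p) * (t ^ (a - 1) / (t ^ 2 + 1) ^ (p / 2)) :=
        mul_le_mul_of_nonneg_left hmono hA.le
    _ = ‖z‖ ^ (a - p) * ∫ t in Ioi (0 : ℝ), t ^ (a - 1) / (t ^ 2 + 1) ^ (p / 2) := by
        rw [integral_const_mul, ← mul_assoc, mul_comm ‖z‖, ← rpow_add_one hA.ne']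
        ring_nf

theorem stmt_6 (d : ℕ) (hd : 1 ≤ d) (s p : ℝ) (hs : 0 < s) (hp : (d : ℝ) / (2 * s) < p)
    (lam : ℂ) (hre : lam.re < 0) :
    ∫ r in Set.Ioi (0 : ℝ), r ^ ((d : ℝ) - 1) / ‖((r ^ (2 * s) : ℝ) : ℂ) - lam‖ ^ p ≤
      1 / (2 * s) * (∫ t in Set.Ioi (0 : ℝ), t ^ ((d : ℝ) / (2 * s) - 1) / (t ^ 2 + 1) ^ (p / 2)) *
        ‖lam‖ ^ ((d : ℝ) / (2 * s) - 1) / ‖lam‖ ^ (p - 1) := by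
  have hlam : lam ≠ 0 := fun h => by simp [h] at hre
  have ha : 0 < (d : ℝ) / (2 * s) := by positivity
  have hsubst := integral_Ioi_rpow_smul_comp_rpow (fun y : ℝ => (‖(y : ℂ) - lam‖ ^ p)⁻¹) d
    (by positivity : 0 < 2 * s)
  simp only [smul_eq_mul, ← div_eq_mul_inv] at hsubst
  rw [hsubst, mul_div_assoc, ← rpow_sub (norm_pos_iff.mpr hlam), sub_sub_sub_cancel_right,
    one_div, mul_assoc, mul_comm (∫ _ in _, _)]
  gcongr
  exact integral_Ioi_rpow_div_norm_ofReal_sub_rpow_le hre.le hlam ha hp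
end

section
/- Let d ≥ 1, 0 < s ≤ d/2, p > d/(2s), and λ = λ₀ + iλ₁ ∈ ℂ \ [0,∞). Then there is a constant K depending only on d, p, s such that ∫₀^∞ r^(d-1)/|r^(2s) - λ|^p dr ≤ K · |λ|^(d/(2s)-1)/d(λ,[0,∞))^(p-1). -/
/-!
Substituting `u = r ^ (2 * s)` turns the integral into `(2 s)⁻¹ ∫₀^∞ u ^ (α - 1) / |u - λ| ^ p`
with `α = d / (2 s) ≥ 1`. For `u ≥ 0` both `δ = d(λ, [0, ∞))` and `|u - |λ||` are at most
`|u - λ|`, so the integrand is at most `2 ^ p u ^ (α - 1) (δ + |u - |λ||) ^ (-p)`. On `(0, 2|λ|]`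
the weight is at most `(2|λ|) ^ (α - 1)` and the peaked kernel `(δ + |u - |λ||) ^ (-p)` has
integral at most `2 δ ^ (1 - p) / (p - 1)`; on `(2|λ|, ∞)` the kernel is at most `(u / 2) ^ (-p)`,
and the tail contributes `O(|λ| ^ (α - p)) ≤ O(|λ| ^ (α - 1) δ ^ (1 - p))` because `δ ≤ |λ|`.
-/

open MeasureTheory Set Real Metric
open scoped Interval

section PeakedKernel

variable {δ M p α : ℝ}

lemma continuous_add_abs_sub_rpow_neg (hδ : 0 < δ) :
    Continuous fun u : ℝ => (δ + |u - M|) ^ (-p) :=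
  (continuous_const.add (continuous_id.sub continuous_const).abs).rpow_const
    fun _ => Or.inl (add_pos_of_pos_of_nonneg hδ (abs_nonneg _)).ne'

lemma integral_add_rpow_neg_le (hδ : 0 < δ) (hp : 1 < p) {L : ℝ} (hL : 0 ≤ L) :
    ∫ v in (0 : ℝ)..L, (δ + v) ^ (-p) ≤ δ ^ (1 - p) / (p - 1) := by
  have h0 : (0 : ℝ) ∉ [[δ, δ + L]] := by
    rw [uIcc_of_le (by linarith)]
    exact fun h => absurd h.1 (not_le.2 hδ)
  rw [intervalIntegral.integral_comp_add_left (fun x => x ^ (-p)), add_zero,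
    integral_rpow (Or.inr ⟨by linarith, h0⟩), show -p + 1 = 1 - p by ring, ← neg_div_neg_eq,
    neg_sub, neg_sub]
  gcongr
  exact sub_le_self _ (rpow_nonneg (by linarith) _)

lemma integral_add_abs_sub_rpow_neg_le (hδ : 0 < δ) (hp : 1 < p) (hM : 0 ≤ M) :
    ∫ u in (0 : ℝ)..2 * M, (δ + |u - M|) ^ (-p) ≤ 2 * (δ ^ (1 - p) / (p - 1)) := by
  set f : ℝ → ℝ := fun v => (δ + |v|) ^ (-p)
  have hf : Continuous f := by simpa using continuous_add_abs_sub_rpow_neg (M := 0) (p := p) hδ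
  have h_even : ∫ v in -M..0, f v = ∫ v in (0 : ℝ)..M, f v := by
    simpa [f] using (intervalIntegral.integral_comp_neg (a := 0) (b := M) f).symm
  have h_right : ∫ v in (0 : ℝ)..M, f v = ∫ v in (0 : ℝ)..M, (δ + v) ^ (-p) :=
    intervalIntegral.integral_congr fun v hv => by
      rw [uIcc_of_le hM] at hv
      simp only [f, abs_of_nonneg hv.1]
  calc ∫ u in (0 : ℝ)..2 * M, f (u - M)
      = ∫ v in -M..M, f v := by
        rw [intervalIntegral.integral_comp_sub_right]
        ring_nf
    _ = 2 * ∫ v in (0 : ℝ)..M, (δ + v) ^ (-p) := by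
        rw [← intervalIntegral.integral_add_adjacent_intervals (b := 0)
          (hf.intervalIntegrable _ _) (hf.intervalIntegrable _ _), h_even, h_right]
        ring
    _ ≤ 2 * (δ ^ (1 - p) / (p - 1)) := by gcongr; exact integral_add_rpow_neg_le hδ hp hM

lemma rpow_mul_add_abs_sub_rpow_neg_le (hδ : 0 ≤ δ) (hp : 0 ≤ p) {u : ℝ} (hu : 0 < u)
    (hMu : 2 * M ≤ u) :
    u ^ (α - 1) * (δ + |u - M|) ^ (-p) ≤ 2 ^ p * u ^ (α - 1 - p) := by
  have h_half : u / 2 ≤ δ + |u - M| := by linarith [le_abs_self (u - M)]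
  calc u ^ (α - 1) * (δ + |u - M|) ^ (-p)
      ≤ u ^ (α - 1) * (u / 2) ^ (-p) :=
        mul_le_mul_of_nonneg_left (rpow_le_rpow_of_nonpos (by positivity) h_half (neg_nonpos.2 hp))
          (rpow_nonneg hu.le _)
    _ = 2 ^ p * u ^ (α - 1 - p) := by
        rw [rpow_neg (by positivity), div_rpow hu.le zero_le_two, inv_div, rpow_sub hu (α - 1) p]
        ring

lemma integrableOn_rpow_mul_add_abs_sub_rpow_neg (hδ : 0 < δ) (hM : 0 < M) (hα : 1 ≤ α)
    (hαp : α < p) :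
    IntegrableOn (fun u => u ^ (α - 1) * (δ + |u - M|) ^ (-p)) (Ioi 0) := by
  have hcont : Continuous fun u : ℝ => u ^ (α - 1) * (δ + |u - M|) ^ (-p) :=
    (continuous_id.rpow_const fun _ => Or.inr (by linarith)).mul
      (continuous_add_abs_sub_rpow_neg hδ)
  have h_tail : IntegrableOn (fun u => u ^ (α - 1) * (δ + |u - M|) ^ (-p)) (Ioi (2 * M)) := by
    have h_dom : IntegrableOn (fun u => 2 ^ p * u ^ (α - 1 - p)) (Ioi (2 * M)) :=
      (integrableOn_Ioi_rpow_of_lt (by linarith) (by positivity)).const_mul _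
    refine h_dom.mono' hcont.aestronglyMeasurable.restrict ?_
    filter_upwards [ae_restrict_mem measurableSet_Ioi] with u (hu : 2 * M < u)
    have hu0 : 0 < u := by linarith
    rw [norm_of_nonneg (by positivity)]
    exact rpow_mul_add_abs_sub_rpow_neg_le hδ.le (by linarith) hu0 hu.le
  rw [← Ioc_union_Ioi_eq_Ioi (by linarith : (0 : ℝ) ≤ 2 * M)]
  exact hcont.integrableOn_Ioc.union h_tail

theorem integral_rpow_mul_add_abs_sub_rpow_neg_le (hδ : 0 < δ) (hδM : δ ≤ M) (hα : 1 ≤ α)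
    (hαp : α < p) :
    ∫ u in Ioi 0, u ^ (α - 1) * (δ + |u - M|) ^ (-p) ≤
      2 ^ α * (1 / (p - 1) + 1 / (p - α)) * M ^ (α - 1) * δ ^ (1 - p) := by
  set G : ℝ → ℝ := fun u => u ^ (α - 1) * (δ + |u - M|) ^ (-p)
  have hM : 0 < M := hδ.trans_le hδM
  have hp : 1 < p := hα.trans_lt hαp
  have hG : IntegrableOn G (Ioi 0) := integrableOn_rpow_mul_add_abs_sub_rpow_neg hδ hM hα hαp
  have h_near : ∫ u in Ioc 0 (2 * M), G u ≤ 2 ^ α / (p - 1) * M ^ (α - 1) * δ ^ (1 - p) :=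
    calc ∫ u in Ioc 0 (2 * M), G u
        ≤ ∫ u in Ioc 0 (2 * M), (2 * M) ^ (α - 1) * (δ + |u - M|) ^ (-p) := by
          refine setIntegral_mono_on (hG.mono_set Ioc_subset_Ioi_self)
            ((continuous_add_abs_sub_rpow_neg hδ).integrableOn_Ioc.const_mul _) measurableSet_Ioc
            fun u hu => ?_
          exact mul_le_mul_of_nonneg_right (rpow_le_rpow hu.1.le hu.2 (by linarith))
            (rpow_nonneg (add_nonneg hδ.le (abs_nonneg _)) _)
      _ = (2 * M) ^ (α - 1) * ∫ u in (0 : ℝ)..2 * M, (δ + |u - M|) ^ (-p) := by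
          rw [integral_const_mul, intervalIntegral.integral_of_le (by positivity)]
      _ ≤ (2 * M) ^ (α - 1) * (2 * (δ ^ (1 - p) / (p - 1))) := by
          gcongr
          exact integral_add_abs_sub_rpow_neg_le hδ hp hM.le
      _ = 2 ^ α / (p - 1) * M ^ (α - 1) * δ ^ (1 - p) := by
          rw [mul_rpow zero_le_two hM.le, rpow_sub_one two_ne_zero]
          field_simp
  have h_far : ∫ u in Ioi (2 * M), G u ≤ 2 ^ α / (p - α) * M ^ (α - 1) * δ ^ (1 - p) :=
    calc ∫ u in Ioi (2 * M), G u
        ≤ ∫ u in Ioi (2 * M), 2 ^ p * u ^ (α - 1 - p) := by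
          refine setIntegral_mono_on (hG.mono_set (Ioi_subset_Ioi (by positivity)))
            ((integrableOn_Ioi_rpow_of_lt (by linarith) (by positivity)).const_mul _)
            measurableSet_Ioi fun u (hu : 2 * M < u) => ?_
          exact rpow_mul_add_abs_sub_rpow_neg_le hδ.le (by linarith) (by linarith) hu.le
      _ = 2 ^ α / (p - α) * M ^ (α - 1) * M ^ (1 - p) := by
          rw [integral_const_mul, integral_Ioi_rpow_of_lt (by linarith) (by positivity),
            show α - 1 - p + 1 = α - p by ring, mul_rpow zero_le_two hM.le, mul_assoc _ (M ^ _),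
            ← rpow_add hM, show α - 1 + (1 - p) = α - p by ring, rpow_sub two_pos, neg_div,
            ← div_neg, neg_sub]
          field_simp
      _ ≤ 2 ^ α / (p - α) * M ^ (α - 1) * δ ^ (1 - p) :=
          mul_le_mul_of_nonneg_left (rpow_le_rpow_of_nonpos hδ hδM (by linarith))
            (mul_nonneg (div_nonneg (by positivity) (sub_pos.2 hαp).le) (rpow_nonneg hM.le _))
  rw [← Ioc_union_Ioi_eq_Ioi (by positivity : (0 : ℝ) ≤ 2 * M),
    setIntegral_union (Ioc_disjoint_Ioi le_rfl) measurableSet_Ioi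
      (hG.mono_set Ioc_subset_Ioi_self) (hG.mono_set (Ioi_subset_Ioi (by positivity)))]
  calc _ ≤ _ := add_le_add h_near h_far
    _ = _ := by ring

end PeakedKernel

lemma integral_Ioi_rpow_div_comp_rpow (f : ℝ → ℝ) {a q : ℝ} (hq : 0 < q) :
    ∫ x in Ioi 0, x ^ (a - 1) / f (x ^ q) = q⁻¹ * ∫ y in Ioi 0, y ^ (a / q - 1) / f y := by
  rw [← integral_comp_rpow_Ioi_of_pos hq (g := fun y => y ^ (a / q - 1) / f y),
    ← integral_const_mul]
  refine setIntegral_congr_fun measurableSet_Ioi fun x (hx : 0 < x) => ?_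
  have h_exp : x ^ (q - 1) * (x ^ q) ^ (a / q - 1) = x ^ (a - 1) := by
    rw [← rpow_mul hx.le, ← rpow_add hx]
    congr 1
    field_simp
    ring
  rw [smul_eq_mul, ← h_exp]
  field_simp

section NonnegRealRay

open Complex

variable {lam : ℂ}

lemma infDist_ofReal_Ici_pos (hlam : lam ∉ ofReal '' Ici 0) :
    0 < infDist lam (ofReal '' Ici 0) :=
  ((isometry_ofReal.isClosedEmbedding.isClosedMap _ isClosed_Ici).notMem_iff_infDist_pos
    ⟨0, 0, self_mem_Ici, ofReal_zero⟩).1 hlam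

lemma infDist_ofReal_Ici_le_norm : infDist lam (ofReal '' Ici 0) ≤ ‖lam‖ := by
  simpa using
    infDist_le_dist_of_mem (x := lam) (mem_image_of_mem ofReal (self_mem_Ici (a := (0 : ℝ))))

lemma infDist_ofReal_Ici_add_abs_sub_norm_le {u : ℝ} (hu : 0 ≤ u) :
    infDist lam (ofReal '' Ici 0) + |u - ‖lam‖| ≤ 2 * ‖(u : ℂ) - lam‖ := by
  have h_dist : infDist lam (ofReal '' Ici 0) ≤ ‖(u : ℂ) - lam‖ := by
    simpa [Complex.dist_eq, norm_sub_rev] using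
      infDist_le_dist_of_mem (x := lam) (mem_image_of_mem ofReal (show u ∈ Ici 0 from hu))
  have h_abs : |u - ‖lam‖| ≤ ‖(u : ℂ) - lam‖ := by
    simpa [abs_of_nonneg hu] using abs_norm_sub_norm_le (u : ℂ) lam
  linarith

lemma inv_norm_ofReal_sub_rpow_le (hlam : lam ∉ ofReal '' Ici 0) {p : ℝ} (hp : 0 ≤ p) {u : ℝ}
    (hu : 0 ≤ u) :
    (‖(u : ℂ) - lam‖ ^ p)⁻¹ ≤ 2 ^ p * (infDist lam (ofReal '' Ici 0) + |u - ‖lam‖|) ^ (-p) := by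
  have h_pos : 0 < infDist lam (ofReal '' Ici 0) + |u - ‖lam‖| :=
    add_pos_of_pos_of_nonneg (infDist_ofReal_Ici_pos hlam) (abs_nonneg _)
  calc (‖(u : ℂ) - lam‖ ^ p)⁻¹
      = 2 ^ p * (2 * ‖(u : ℂ) - lam‖) ^ (-p) := by
        rw [mul_rpow zero_le_two (norm_nonneg _), rpow_neg zero_le_two, rpow_neg (norm_nonneg _),
          mul_inv_cancel_left₀ (by positivity)]
    _ ≤ 2 ^ p * (infDist lam (ofReal '' Ici 0) + |u - ‖lam‖|) ^ (-p) :=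
        mul_le_mul_of_nonneg_left (rpow_le_rpow_of_nonpos h_pos
          (infDist_ofReal_Ici_add_abs_sub_norm_le hu) (neg_nonpos.2 hp)) (by positivity)

theorem integral_rpow_div_norm_ofReal_sub_rpow_le {α p : ℝ} (hα : 1 ≤ α) (hαp : α < p)
    (hlam : lam ∉ ofReal '' Ici 0) :
    ∫ u in Ioi (0 : ℝ), u ^ (α - 1) / ‖(u : ℂ) - lam‖ ^ p ≤
      2 ^ p * (2 ^ α * (1 / (p - 1) + 1 / (p - α))) * ‖lam‖ ^ (α - 1) /
        infDist lam (ofReal '' Ici 0) ^ (p - 1) := by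
  set δ := infDist lam (ofReal '' Ici 0)
  have hδ : 0 < δ := infDist_ofReal_Ici_pos hlam
  have hp : 0 ≤ p := by linarith
  calc ∫ u in Ioi (0 : ℝ), u ^ (α - 1) / ‖(u : ℂ) - lam‖ ^ p
      ≤ ∫ u in Ioi (0 : ℝ), 2 ^ p * (u ^ (α - 1) * (δ + |u - ‖lam‖|) ^ (-p)) := by
        refine integral_mono_of_nonneg ?_ ((integrableOn_rpow_mul_add_abs_sub_rpow_neg hδ
          (hδ.trans_le infDist_ofReal_Ici_le_norm) hα hαp).const_mul _) ?_
        all_goals filter_upwards [ae_restrict_mem measurableSet_Ioi] with u (hu : 0 < u)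
        · positivity
        · rw [div_eq_mul_inv, mul_left_comm]
          gcongr
          exact inv_norm_ofReal_sub_rpow_le hlam hp hu.le
    _ = 2 ^ p * ∫ u in Ioi (0 : ℝ), u ^ (α - 1) * (δ + |u - ‖lam‖|) ^ (-p) := integral_const_mul _ _
    _ ≤ 2 ^ p * (2 ^ α * (1 / (p - 1) + 1 / (p - α)) * ‖lam‖ ^ (α - 1) * δ ^ (1 - p)) := by
        gcongr
        exact integral_rpow_mul_add_abs_sub_rpow_neg_le hδ infDist_ofReal_Ici_le_norm hα hαp
    _ = _ := by
        rw [show 1 - p = -(p - 1) by ring, rpow_neg hδ.le]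
        ring

end NonnegRealRay

theorem stmt_7_general (d : ℕ) (s p : ℝ) (hs : 0 < s) (hsd : s ≤ (d : ℝ) / 2)
    (hp : (d : ℝ) / (2 * s) < p) :
    ∃ K : ℝ, ∀ lam : ℂ, (¬ ∃ t : ℝ, 0 ≤ t ∧ (t : ℂ) = lam) →
      ∫ r in Set.Ioi (0 : ℝ), r ^ ((d : ℝ) - 1) / ‖((r ^ (2 * s) : ℝ) : ℂ) - lam‖ ^ p ≤
        K * ‖lam‖ ^ ((d : ℝ) / (2 * s) - 1) /
          Metric.infDist lam {w : ℂ | ∃ t : ℝ, 0 ≤ t ∧ w = (t : ℂ)} ^ (p - 1) := by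
  have h2s : 0 < 2 * s := by linarith
  have hα : 1 ≤ (d : ℝ) / (2 * s) := by rw [le_div_iff₀ h2s]; linarith
  have h_ray : {w : ℂ | ∃ t : ℝ, 0 ≤ t ∧ w = (t : ℂ)} = Complex.ofReal '' Ici 0 := by
    ext w
    simp [eq_comm]
  refine ⟨(2 * s)⁻¹ * (2 ^ p * (2 ^ ((d : ℝ) / (2 * s)) * (1 / (p - 1) + 1 / (p - d / (2 * s))))),
    fun lam hlam => ?_⟩
  calc _ = (2 * s)⁻¹ * ∫ u in Ioi (0 : ℝ), u ^ ((d : ℝ) / (2 * s) - 1) / ‖(u : ℂ) - lam‖ ^ p :=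
        integral_Ioi_rpow_div_comp_rpow (fun u => ‖(u : ℂ) - lam‖ ^ p) h2s
    _ ≤ _ := by
        rw [h_ray, mul_assoc, mul_div_assoc]
        gcongr
        exact integral_rpow_div_norm_ofReal_sub_rpow_le hα hp hlam

theorem stmt_7 (d : ℕ) (hd : 1 ≤ d) (s p : ℝ) (hs : 0 < s) (hsd : s ≤ (d : ℝ) / 2)
    (hp : (d : ℝ) / (2 * s) < p) :
    ∃ K : ℝ, ∀ lam : ℂ, (¬ ∃ t : ℝ, 0 ≤ t ∧ (t : ℂ) = lam) →
      ∫ r in Set.Ioi (0 : ℝ), r ^ ((d : ℝ) - 1) / ‖((r ^ (2 * s) : ℝ) : ℂ) - lam‖ ^ p ≤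
        K * ‖lam‖ ^ ((d : ℝ) / (2 * s) - 1) /
          Metric.infDist lam {w : ℂ | ∃ t : ℝ, 0 ≤ t ∧ w = (t : ℂ)} ^ (p - 1) :=
  stmt_7_general d s p hs hsd hp
end

section
/- Let d ≥ 1, s > d/2, p > 1, and λ ∈ ℂ \ [0,∞). Then there is a constant N depending only on d, p, s such that ∫₀^∞ r^(d-1)/|r^(2s) - λ|^p dr ≤ N / d(λ,[0,∞))^(p - d/(2s)). -/
/-!
Write `δ` for the distance from `λ` to `[0, ∞)` and `a = |λ|`. For `u ≥ 0` both `δ` and `|u - a|`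
are at most `|u - λ|`, so for any `β ≤ p` we get `|u - λ|^(-p) ≤ δ^(β - p) |u - a|^(-β)`.
The substitution `v = r^(2s)` turns the integral into `(2s)⁻¹ ∫ v^(α-1) |v - λ|^(-p) dv` with
`α = d/(2s) ∈ (0, 1)`. Choosing `α < β < 1`, the integral `∫ v^(α-1) |v - a|^(-β) dv` converges
(at `0`, at `a` and at `∞`) and equals `a^(α-β)` times its value at `a = 1` by scaling. Since
`α - β < 0` and `a ≥ δ`, the integral is at most `(2s)⁻¹ J δ^(β-p) δ^(α-β) = (2s)⁻¹ J / δ^(p-α)`,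
where `J = ∫ v^(α-1) |v - 1|^(-β) dv`.
-/

open MeasureTheory Real Set

lemma intervalIntegrable_abs_sub_rpow {r : ℝ} (hr : -1 < r) (c a b : ℝ) :
    IntervalIntegrable (fun x => |x - c| ^ r) volume a b := by
  have hloc : LocallyIntegrable (fun x : ℝ => |x| ^ r) volume :=
    locallyIntegrable_of_norm_le_rpow (C := 1) (α := -r) (by simp) (by simp; linarith)
      (Filter.Eventually.of_forall fun x => by
        simp [abs_rpow_of_nonneg (abs_nonneg x)]) (measurable_abs.pow_const r).aestronglyMeasurable
  simpa using ((hloc.integrableOn_isCompact isCompact_uIcc).intervalIntegrable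
    (a := a - c) (b := b - c)).comp_sub_right c

lemma rpow_mul_abs_sub_one_rpow_le {α β v : ℝ} (hα : α ≤ 1) (hβ : 0 ≤ β) (hv : 0 < v) :
    v ^ (α - 1) * |v - 1| ^ (-β) ≤ 2 ^ β * v ^ (α - 1) + 2 ^ (1 - α) * |v - 1| ^ (-β) := by
  rcases le_total v (1 / 2) with hv2 | hv2
  · have h : |v - 1| ^ (-β) ≤ 2 ^ β := by
      calc |v - 1| ^ (-β) ≤ (1 / 2) ^ (-β) := by
            refine rpow_le_rpow_of_nonpos (by norm_num) ?_ (by linarith)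
            rw [abs_sub_comm, abs_of_pos (by linarith)]
            linarith
        _ = 2 ^ β := by rw [one_div, inv_rpow zero_le_two, ← rpow_neg zero_le_two, neg_neg]
    calc v ^ (α - 1) * |v - 1| ^ (-β) ≤ 2 ^ β * v ^ (α - 1) := by
          rw [mul_comm (2 ^ β)]
          exact mul_le_mul_of_nonneg_left h (by positivity)
      _ ≤ _ := le_add_of_nonneg_right (by positivity)
  · have h : v ^ (α - 1) ≤ 2 ^ (1 - α) := by
      calc v ^ (α - 1) ≤ (1 / 2) ^ (α - 1) := rpow_le_rpow_of_nonpos (by norm_num) hv2 (by linarith)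
        _ = 2 ^ (1 - α) := by rw [one_div, inv_rpow zero_le_two, ← rpow_neg zero_le_two, neg_sub]
    calc v ^ (α - 1) * |v - 1| ^ (-β) ≤ 2 ^ (1 - α) * |v - 1| ^ (-β) :=
          mul_le_mul_of_nonneg_right h (by positivity)
      _ ≤ _ := le_add_of_nonneg_left (by positivity)

lemma rpow_mul_abs_sub_one_rpow_le_of_two_le {α β v : ℝ} (hβ : 0 ≤ β) (hv : 2 ≤ v) :
    v ^ (α - 1) * |v - 1| ^ (-β) ≤ 2 ^ β * v ^ (α - 1 - β) := by
  have hv0 : 0 < v := by linarith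
  calc v ^ (α - 1) * |v - 1| ^ (-β) ≤ v ^ (α - 1) * (v / 2) ^ (-β) := by
        refine mul_le_mul_of_nonneg_left ?_ (rpow_nonneg hv0.le _)
        exact rpow_le_rpow_of_nonpos (by positivity) (by rw [abs_of_pos (by linarith)]; linarith)
          (by linarith)
    _ = 2 ^ β * v ^ (α - 1 - β) := by
        rw [div_rpow hv0.le zero_le_two, rpow_neg zero_le_two, sub_eq_add_neg (α - 1),
          rpow_add hv0]
        field_simp

lemma integrableOn_rpow_mul_abs_sub_one_rpow {α β : ℝ} (hα : 0 < α) (hαβ : α < β) (hβ : β < 1) :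
    IntegrableOn (fun v : ℝ => v ^ (α - 1) * |v - 1| ^ (-β)) (Ioi 0) := by
  have hmeas : AEStronglyMeasurable (fun v : ℝ => v ^ (α - 1) * |v - 1| ^ (-β)) := by fun_prop
  rw [← Ioc_union_Ioi_eq_Ioi zero_le_two]
  refine IntegrableOn.union ?_ ?_
  · have hdom : IntegrableOn (fun v : ℝ => 2 ^ β * v ^ (α - 1) + 2 ^ (1 - α) * |v - 1| ^ (-β))
        (Ioc 0 2) := by
      rw [← intervalIntegrable_iff_integrableOn_Ioc_of_le zero_le_two]
      exact ((intervalIntegral.intervalIntegrable_rpow' (by linarith)).const_mul _).add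
        ((intervalIntegrable_abs_sub_rpow (by linarith) 1 0 2).const_mul _)
    refine hdom.mono' hmeas.restrict ((ae_restrict_iff' measurableSet_Ioc).2 ?_)
    refine Filter.Eventually.of_forall fun v ⟨hv0, _⟩ => ?_
    exact (norm_of_nonneg (by positivity)).trans_le
      (rpow_mul_abs_sub_one_rpow_le (by linarith) (by linarith) hv0)
  · have hdom : IntegrableOn (fun v : ℝ => 2 ^ β * v ^ (α - 1 - β)) (Ioi 2) :=
      (integrableOn_Ioi_rpow_of_lt (by linarith) zero_lt_two).const_mul _
    refine hdom.mono' hmeas.restrict ((ae_restrict_iff' measurableSet_Ioi).2 ?_)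
    refine Filter.Eventually.of_forall fun v (hv : 2 < v) => ?_
    have hv0 : 0 < v := by linarith
    exact (norm_of_nonneg (by positivity)).trans_le
      (rpow_mul_abs_sub_one_rpow_le_of_two_le (by linarith) hv.le)

lemma rpow_mul_abs_sub_rpow_comp_mul_left (α β : ℝ) {a x : ℝ} (ha : 0 < a) (hx : 0 ≤ x) :
    (a * x) ^ (α - 1) * |a * x - a| ^ (-β) = a ^ (α - 1 - β) * (x ^ (α - 1) * |x - 1| ^ (-β)) := by
  rw [show a * x - a = a * (x - 1) by ring, abs_mul, abs_of_pos ha, mul_rpow ha.le hx,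
    mul_rpow ha.le (abs_nonneg _), sub_eq_add_neg (α - 1), rpow_add ha]
  ring

lemma integrableOn_rpow_mul_abs_sub_rpow {α β a : ℝ} (ha : 0 < a) (hα : 0 < α) (hαβ : α < β)
    (hβ : β < 1) : IntegrableOn (fun v : ℝ => v ^ (α - 1) * |v - a| ^ (-β)) (Ioi 0) := by
  rw [← mul_zero a, ← integrableOn_Ioi_comp_mul_left_iff _ 0 ha]
  refine IntegrableOn.congr_fun ((integrableOn_rpow_mul_abs_sub_one_rpow hα hαβ hβ).const_mul
    (a ^ (α - 1 - β))) (fun x hx => ?_) measurableSet_Ioi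
  exact (rpow_mul_abs_sub_rpow_comp_mul_left α β ha (le_of_lt hx)).symm

lemma integral_rpow_mul_abs_sub_rpow {α β a : ℝ} (ha : 0 < a) :
    ∫ v in Ioi (0 : ℝ), v ^ (α - 1) * |v - a| ^ (-β) =
      a ^ (α - β) * ∫ v in Ioi (0 : ℝ), v ^ (α - 1) * |v - 1| ^ (-β) := by
  have h := integral_comp_mul_left_Ioi' (fun v : ℝ => v ^ (α - 1) * |v - a| ^ (-β)) 0 ha
  rw [mul_zero] at h
  rw [← h, smul_eq_mul, setIntegral_congr_fun measurableSet_Ioi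
    fun x hx => rpow_mul_abs_sub_rpow_comp_mul_left α β ha (le_of_lt hx), integral_const_mul,
    ← mul_assoc, show α - β = 1 + (α - 1 - β) by ring, rpow_add ha, rpow_one]

lemma integral_rpow_div_comp_rpow_Ioi {σ : ℝ} (hσ : 0 < σ) (α : ℝ) (g : ℝ → ℝ) :
    ∫ r in Ioi (0 : ℝ), r ^ (σ * α - 1) / g (r ^ σ) =
      σ⁻¹ * ∫ v in Ioi (0 : ℝ), v ^ (α - 1) / g v := by
  rw [← integral_comp_rpow_Ioi_of_pos (g := fun v => v ^ (α - 1) / g v) hσ, ← integral_const_mul]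
  refine setIntegral_congr_fun measurableSet_Ioi fun r (hr : 0 < r) => ?_
  rw [smul_eq_mul, ← rpow_mul hr.le, mul_assoc σ, inv_mul_cancel_left₀ hσ.ne', ← mul_div_assoc,
    ← rpow_add hr]
  ring_nf

lemma inv_rpow_le_rpow_mul_rpow_neg {m δ e p β : ℝ} (hδ : 0 < δ) (he : 0 < e) (hδm : δ ≤ m)
    (hem : e ≤ m) (hβ : 0 ≤ β) (hβp : β ≤ p) : (m ^ p)⁻¹ ≤ δ ^ (β - p) * e ^ (-β) := by
  have hm : 0 < m := hδ.trans_le hδm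
  calc (m ^ p)⁻¹ = (m ^ (p - β) * m ^ β)⁻¹ := by rw [← rpow_add hm, sub_add_cancel]
    _ ≤ (δ ^ (p - β) * e ^ β)⁻¹ :=
        inv_anti₀ (by positivity) (mul_le_mul (rpow_le_rpow hδ.le hδm (by linarith))
          (rpow_le_rpow he.le hem hβ) (by positivity) (by positivity))
    _ = δ ^ (β - p) * e ^ (-β) := by rw [mul_inv, ← rpow_neg hδ.le, ← rpow_neg he.le, neg_sub]

lemma integral_rpow_div_norm_ofReal_sub_rpow_le_s8 {α β p δ : ℝ} {lam : ℂ} (hα : 0 < α)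
    (hαβ : α < β) (hβ : β < 1) (hβp : β ≤ p) (hδ : 0 < δ)
    (hδlam : ∀ t : ℝ, 0 ≤ t → δ ≤ ‖(t : ℂ) - lam‖) :
    ∫ v in Ioi (0 : ℝ), v ^ (α - 1) / ‖(v : ℂ) - lam‖ ^ p ≤
      (∫ v in Ioi (0 : ℝ), v ^ (α - 1) * |v - 1| ^ (-β)) * δ ^ (α - p) := by
  have hδa : δ ≤ ‖lam‖ := by simpa using hδlam 0 le_rfl
  have ha : 0 < ‖lam‖ := hδ.trans_le hδa
  have hbound : ∀ᵐ v : ℝ ∂volume.restrict (Ioi 0), v ^ (α - 1) / ‖(v : ℂ) - lam‖ ^ p ≤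
      δ ^ (β - p) * (v ^ (α - 1) * |v - ‖lam‖| ^ (-β)) := by
    -- `0 ^ (-β) = 0` in Lean, so the bound fails at `v = ‖lam‖`.
    filter_upwards [ae_restrict_mem measurableSet_Ioi, ae_restrict_of_ae (volume.ae_ne ‖lam‖)]
      with v (hv : 0 < v) hva
    have hdist : |v - ‖lam‖| ≤ ‖(v : ℂ) - lam‖ := by
      simpa [abs_of_pos hv] using abs_norm_sub_norm_le (v : ℂ) lam
    have h := inv_rpow_le_rpow_mul_rpow_neg hδ (abs_pos.2 (sub_ne_zero.2 hva)) (hδlam v hv.le)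
      hdist (by linarith) hβp
    calc v ^ (α - 1) / ‖(v : ℂ) - lam‖ ^ p = v ^ (α - 1) * (‖(v : ℂ) - lam‖ ^ p)⁻¹ :=
          div_eq_mul_inv _ _
      _ ≤ v ^ (α - 1) * (δ ^ (β - p) * |v - ‖lam‖| ^ (-β)) := by gcongr
      _ = δ ^ (β - p) * (v ^ (α - 1) * |v - ‖lam‖| ^ (-β)) := by ring
  set J := ∫ v in Ioi (0 : ℝ), v ^ (α - 1) * |v - 1| ^ (-β)
  have hJ : 0 ≤ J := setIntegral_nonneg measurableSet_Ioi fun v (hv : 0 < v) => by positivity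
  calc ∫ v in Ioi (0 : ℝ), v ^ (α - 1) / ‖(v : ℂ) - lam‖ ^ p
      ≤ ∫ v in Ioi (0 : ℝ), δ ^ (β - p) * (v ^ (α - 1) * |v - ‖lam‖| ^ (-β)) :=
        integral_mono_of_nonneg (ae_restrict_of_forall_mem measurableSet_Ioi
          fun v (hv : 0 < v) => by positivity)
          ((integrableOn_rpow_mul_abs_sub_rpow ha hα hαβ hβ).const_mul _) hbound
    _ = δ ^ (β - p) * (‖lam‖ ^ (α - β) * J) := by
        rw [integral_const_mul, integral_rpow_mul_abs_sub_rpow ha]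
    _ ≤ δ ^ (β - p) * (δ ^ (α - β) * J) := by
        gcongr ?_ * (?_ * _)
        exact rpow_le_rpow_of_nonpos hδ hδa (by linarith)
    _ = J * δ ^ (α - p) := by
        rw [← mul_assoc, ← rpow_add hδ, mul_comm]
        ring_nf

lemma isClosed_setOf_ofReal_nonneg : IsClosed {w : ℂ | ∃ t : ℝ, 0 ≤ t ∧ w = t} := by
  convert Complex.isometry_ofReal.isClosedEmbedding.isClosedMap _ (isClosed_Ici (a := (0 : ℝ)))
    using 1
  ext; simp [eq_comm]

theorem stmt_8 (d : ℕ) (hd : 1 ≤ d) (s p : ℝ) (hsd : (d : ℝ) / 2 < s) (hp : 1 < p) :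
    ∃ N : ℝ, ∀ lam : ℂ, (¬ ∃ t : ℝ, 0 ≤ t ∧ (t : ℂ) = lam) →
      ∫ r in Set.Ioi (0 : ℝ), r ^ ((d : ℝ) - 1) / ‖((r ^ (2 * s) : ℝ) : ℂ) - lam‖ ^ p ≤
        N / Metric.infDist lam {w : ℂ | ∃ t : ℝ, 0 ≤ t ∧ w = (t : ℂ)} ^ (p - (d : ℝ) / (2 * s)) := by
  have hd1 : (1 : ℝ) ≤ d := by exact_mod_cast hd
  have hs : 0 < 2 * s := by linarith
  set α := (d : ℝ) / (2 * s)
  have hα : 0 < α := div_pos (by linarith) hs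
  have hα1 : α < 1 := by rw [div_lt_one hs]; linarith
  refine ⟨(2 * s)⁻¹ * ∫ v in Ioi (0 : ℝ), v ^ (α - 1) * |v - 1| ^ (-((α + 1) / 2)),
    fun lam hlam => ?_⟩
  set S := {w : ℂ | ∃ t : ℝ, 0 ≤ t ∧ w = (t : ℂ)}
  have hδ : 0 < Metric.infDist lam S := by
    refine (isClosed_setOf_ofReal_nonneg.notMem_iff_infDist_pos
      (Set.nonempty_of_mem (show (0 : ℂ) ∈ S from ⟨0, le_rfl, by simp⟩))).1 ?_
    rintro ⟨t, ht, rfl⟩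
    exact hlam ⟨t, ht, rfl⟩
  have hδlam : ∀ t : ℝ, 0 ≤ t → Metric.infDist lam S ≤ ‖(t : ℂ) - lam‖ := fun t ht => by
    simpa [dist_eq_norm, norm_sub_rev] using
      Metric.infDist_le_dist_of_mem (x := lam) (show (t : ℂ) ∈ S from ⟨t, ht, rfl⟩)
  have hsubst := integral_rpow_div_comp_rpow_Ioi hs α fun v => ‖(v : ℂ) - lam‖ ^ p
  rw [mul_div_cancel₀ _ hs.ne'] at hsubst
  rw [hsubst, div_eq_mul_inv, ← rpow_neg hδ.le, neg_sub, mul_assoc]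
  gcongr
  exact integral_rpow_div_norm_ofReal_sub_rpow_le_s8 hα (by linarith) (by linarith) (by linarith) hδ
    hδlam
end

section
/- Let a > 0 and define g̃(λ) = 1/λ for λ ∈ ℂ \ [a,∞). Then d(g̃(λ), [0, 1/a]) ≥ (1/√5)·d(λ, [a,∞))/(|λ|·(a+|λ|)) for all λ ∈ ℂ \ [a,∞), λ ≠ 0. -/
/-!
Fix `t ∈ [0, 1/a]` and put `A = |λ|`, `D = d(λ, [a,∞))`, and take any `c ≤ 1/2` (here
`c = 1/√5`). If `t > c/(a + A)`, then `1/t ∈ [a,∞)` and `|1/λ - t| = (t/A)·|λ - 1/t| ≥ tD/A`.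
If `t ≤ c/(a + A)`, then `|1/λ - t| ≥ 1/A - t`, which suffices because `D ≤ |λ - a| ≤ a + A`.
-/

open Metric

section HalfLine

variable {a : ℝ} {z : ℂ}

lemma infDist_halfLine_le_add_norm (ha : 0 ≤ a) :
    infDist z {w : ℂ | ∃ t : ℝ, a ≤ t ∧ w = t} ≤ a + ‖z‖ :=
  calc infDist z {w : ℂ | ∃ t : ℝ, a ≤ t ∧ w = t}
      ≤ dist z (a : ℂ) := infDist_le_dist_of_mem ⟨a, le_rfl, rfl⟩
    _ ≤ ‖z‖ + ‖(a : ℂ)‖ := by rw [Complex.dist_eq]; exact norm_sub_le _ _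
    _ = a + ‖z‖ := by rw [Complex.norm_real, Real.norm_of_nonneg ha, add_comm]

lemma dist_one_div_ofReal (hz : z ≠ 0) {t : ℝ} (ht : 0 < t) :
    dist (1 / z) (t : ℂ) = t * dist z ((1 / t : ℝ) : ℂ) / ‖z‖ := by
  have hkey : 1 / z - t = -(t / z) * (z - ((1 / t : ℝ) : ℂ)) := by
    have : (t : ℂ) ≠ 0 := by exact_mod_cast ht.ne'
    push_cast
    field_simp
    ring
  rw [Complex.dist_eq, Complex.dist_eq, hkey, norm_mul, norm_neg, norm_div, Complex.norm_real,
    Real.norm_of_nonneg ht.le]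
  ring

lemma mul_infDist_halfLine_div_le_dist_one_div (hz : z ≠ 0) {t : ℝ} (ht : 0 < t)
    (hta : a ≤ 1 / t) :
    t * infDist z {w : ℂ | ∃ t : ℝ, a ≤ t ∧ w = t} / ‖z‖ ≤ dist (1 / z) (t : ℂ) := by
  rw [dist_one_div_ofReal hz ht]
  gcongr
  exact infDist_le_dist_of_mem ⟨1 / t, hta, rfl⟩

theorem mul_infDist_halfLine_div_le_dist_one_div_of_mem_Icc (ha : 0 < a) (hz : z ≠ 0)
    {c : ℝ} (hc₀ : 0 ≤ c) (hc : c ≤ 1 / 2) {t : ℝ} (ht : t ∈ Set.Icc 0 (1 / a)) :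
    c * infDist z {w : ℂ | ∃ t : ℝ, a ≤ t ∧ w = t} / (‖z‖ * (a + ‖z‖)) ≤
      dist (1 / z) (t : ℂ) := by
  set D := infDist z {w : ℂ | ∃ t : ℝ, a ≤ t ∧ w = t}
  have hA : 0 < ‖z‖ := norm_pos_iff.mpr hz
  have haA : 0 < a + ‖z‖ := by positivity
  have hD : D ≤ a + ‖z‖ := infDist_halfLine_le_add_norm ha.le
  rcases le_or_gt t (c / (a + ‖z‖)) with hsmall | hbig
  · have hlower : 1 / ‖z‖ - t ≤ dist (1 / z) (t : ℂ) := by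
      simpa [Complex.dist_eq, Real.norm_of_nonneg ht.1] using norm_sub_norm_le (1 / z) (t : ℂ)
    have hrhs : 1 / ‖z‖ - c / (a + ‖z‖) = (a + ‖z‖ - c * ‖z‖) / (‖z‖ * (a + ‖z‖)) := by
      field_simp
    refine le_trans ?_ (hlower.trans' (sub_le_sub_left hsmall _))
    rw [hrhs]
    gcongr
    nlinarith [mul_le_mul_of_nonneg_left hD hc₀,
      mul_le_mul_of_nonneg_right hc (by positivity : 0 ≤ a + 2 * ‖z‖)]
  · have ht₀ : 0 < t := (div_nonneg hc₀ haA.le).trans_lt hbig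
    have hta : a ≤ 1 / t := by
      rw [le_one_div ha ht₀]
      exact ht.2
    calc c * D / (‖z‖ * (a + ‖z‖)) = c / (a + ‖z‖) * D / ‖z‖ := by field_simp
      _ ≤ t * D / ‖z‖ := by gcongr; exact infDist_nonneg
      _ ≤ dist (1 / z) (t : ℂ) := mul_infDist_halfLine_div_le_dist_one_div hz ht₀ hta

end HalfLine

theorem stmt_13_general (a : ℝ) (ha : 0 < a) (lam : ℂ)
    (h0 : lam ≠ 0) :
    1 / Real.sqrt 5 * Metric.infDist lam {w : ℂ | ∃ t : ℝ, a ≤ t ∧ w = (t : ℂ)} /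
        (‖lam‖ * (a + ‖lam‖)) ≤
      Metric.infDist (1 / lam) {w : ℂ | ∃ t : ℝ, t ∈ Set.Icc 0 (1 / a) ∧ w = (t : ℂ)} := by
  have hsqrt5 : 1 / Real.sqrt 5 ≤ 1 / 2 := by
    gcongr
    rw [Real.le_sqrt] <;> norm_num
  refine (le_infDist ?_).2 ?_
  · exact ⟨0, 0, ⟨le_rfl, by positivity⟩, Complex.ofReal_zero.symm⟩
  rintro _ ⟨t, ht, rfl⟩
  exact mul_infDist_halfLine_div_le_dist_one_div_of_mem_Icc ha h0 (by positivity) hsqrt5 ht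

theorem stmt_13 (a : ℝ) (ha : 0 < a) (lam : ℂ)
    (hlam : ¬ ∃ t : ℝ, a ≤ t ∧ (t : ℂ) = lam) (h0 : lam ≠ 0) :
    1 / Real.sqrt 5 * Metric.infDist lam {w : ℂ | ∃ t : ℝ, a ≤ t ∧ w = (t : ℂ)} /
        (‖lam‖ * (a + ‖lam‖)) ≤
      Metric.infDist (1 / lam) {w : ℂ | ∃ t : ℝ, t ∈ Set.Icc 0 (1 / a) ∧ w = (t : ℂ)} :=
  stmt_13_general a ha lam h0
end
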